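/- arXiv:1901.09395 — 7 statements merged into one kernel-verified Lean document; each statement's English description precedes it below -/
import Mathlib

section
/- Let ζ : C(M) → ℝ satisfy normalization (ζ(c)=c for constants), stability, and positive homogeneity (ζ(sH)=sζ(H) for s>0). Let X ⊂ M be closed and define τ_ζ(X) = inf{ζ(a) : a ∈ C(M), 0 ≤ a ≤ 1, a ≡ 1 on X}. If τ_ζ(X) = 1, then for every H ∈ C(M), ζ(H) ≥ inf_X H. -/
/-- If τ_ζ(X) = 1 then X is ζ-heavy. -/
theorem stmt_2 {M : Type*} [TopologicalSpace M] [CompactSpace M] [Nonempty M]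
    (ζ : C(M, ℝ) → ℝ)
    (hnorm : ∀ c : ℝ, ζ (ContinuousMap.const M c) = c)
    (hstab : ∀ H₁ H₂ : C(M, ℝ),
      (⨅ x, (H₁ x - H₂ x)) ≤ ζ H₁ - ζ H₂ ∧ ζ H₁ - ζ H₂ ≤ ⨆ x, (H₁ x - H₂ x))
    (hhom : ∀ s : ℝ, 0 < s → ∀ H : C(M, ℝ), ζ (s • H) = s * ζ H)
    (X : Set M) (hX : IsClosed X) (hXne : X.Nonempty)
    (hτ : sInf {r : ℝ | ∃ a : C(M, ℝ),
        (∀ x, 0 ≤ a x ∧ a x ≤ 1) ∧ (∀ x ∈ X, a x = 1) ∧ ζ a = r} = 1) :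
    ∀ H : C(M, ℝ), sInf (H '' X) ≤ ζ H := by
  -- monotonicity
  have hmono : ∀ G₁ G₂ : C(M, ℝ), (∀ x, G₁ x ≤ G₂ x) → ζ G₁ ≤ ζ G₂ := by
    intro G₁ G₂ h
    have h2 := (hstab G₁ G₂).2
    have hle : (⨆ x, (G₁ x - G₂ x)) ≤ 0 := ciSup_le fun x => by linarith [h x]
    linarith
  -- shift invariance
  have hshift : ∀ (G : C(M, ℝ)) (c : ℝ), ζ (G + ContinuousMap.const M c) = ζ G + c := by
    intro G c
    have h1 := (hstab (G + ContinuousMap.const M c) G).1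
    have h2 := (hstab (G + ContinuousMap.const M c) G).2
    simp only [ContinuousMap.add_apply, ContinuousMap.const_apply,
      add_sub_cancel_left] at h1 h2
    rw [ciInf_const] at h1
    rw [ciSup_const] at h2
    linarith
  intro H
  obtain ⟨x₀, hx₀⟩ := hXne
  set m := sInf (H '' X) with hm
  -- global minimum of H
  obtain ⟨z, -, hz⟩ := isCompact_univ.exists_isMinOn (Set.univ_nonempty)
    H.continuous.continuousOn
  have hz' : ∀ x : M, H z ≤ H x := fun x => hz (Set.mem_univ x)
  have himgne : (H '' X).Nonempty := ⟨H x₀, ⟨x₀, hx₀, rfl⟩⟩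
  have hbddX : BddBelow (H '' X) := ⟨H z, by rintro y ⟨x, -, rfl⟩; exact hz' x⟩
  have hmz : H z ≤ m := le_csInf himgne (by rintro y ⟨x, -, rfl⟩; exact hz' x)
  have hmX : ∀ x ∈ X, m ≤ H x := fun x hx => csInf_le hbddX ⟨x, hx, rfl⟩
  set K : ℝ := m - H z + 1 with hK
  have hKpos : (0 : ℝ) < K := by simp only [hK]; linarith
  -- the test function
  set a : C(M, ℝ) := ⟨fun x => min 1 ((H x - m + K) / K), by fun_prop⟩ with ha
  have ha0 : ∀ x, 0 ≤ a x := by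
    intro x
    apply le_min (by norm_num)
    apply div_nonneg _ hKpos.le
    have := hz' x
    simp only [hK]; linarith
  have ha1 : ∀ x, a x ≤ 1 := fun x => min_le_left _ _
  have haX : ∀ x ∈ X, a x = 1 := by
    intro x hx
    apply min_eq_left
    rw [le_div_iff₀ hKpos]
    have := hmX x hx
    linarith
  -- ζ a ≥ 1
  have hbddS : BddBelow {r : ℝ | ∃ a : C(M, ℝ),
      (∀ x, 0 ≤ a x ∧ a x ≤ 1) ∧ (∀ x ∈ X, a x = 1) ∧ ζ a = r} := by
    refine ⟨0, ?_⟩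
    rintro r ⟨b, hb, -, rfl⟩
    have : ζ (ContinuousMap.const M 0) ≤ ζ b := hmono _ _ (fun x => (hb x).1)
    rw [hnorm 0] at this
    exact this
  have hζa : 1 ≤ ζ a := by
    rw [← hτ]
    exact csInf_le hbddS ⟨a, fun x => ⟨ha0 x, ha1 x⟩, haX, rfl⟩
  -- comparison: K • a + (m - K) ≤ H
  have hcomp : ∀ x, (K • a + ContinuousMap.const M (m - K)) x ≤ H x := by
    intro x
    simp only [ContinuousMap.add_apply, ContinuousMap.smul_apply,
      ContinuousMap.const_apply, smul_eq_mul]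
    have h1 : a x ≤ (H x - m + K) / K := min_le_right _ _
    have h2 : K * a x ≤ H x - m + K := by
      calc K * a x ≤ K * ((H x - m + K) / K) := by
            exact mul_le_mul_of_nonneg_left h1 hKpos.le
        _ = H x - m + K := by field_simp
    linarith
  have hfin : m ≤ ζ H := by
    have h1 : ζ (K • a + ContinuousMap.const M (m - K)) ≤ ζ H := hmono _ _ hcomp
    rw [hshift (K • a) (m - K), hhom K hKpos a] at h1
    nlinarith [hζa]
  exact hfin
end

section
/- Let ζ : C(M) → ℝ satisfy normalization, stability, and semi-homogeneity, and suppose ζ is simple: τ_ζ(X) ∈ {0,1} for every closed X ⊂ M. If a closed subset X of M is ζ-pseudoheavy (for every open neighborhood U of X there exists continuous F supported in U with ζ(F) > 0), and M is a compact metric space, then X is ζ-heavy (ζ(H) ≥ inf_X H for all H ∈ C(M)). -/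
/-- If ζ is simple, then every ζ-pseudoheavy closed subset is ζ-heavy. -/
theorem stmt_6 {M : Type*} [MetricSpace M] [CompactSpace M] [Nonempty M]
    (ζ : C(M, ℝ) → ℝ)
    (hnorm : ∀ c : ℝ, ζ (ContinuousMap.const M c) = c)
    (hstab : ∀ H₁ H₂ : C(M, ℝ),
      (⨅ x, (H₁ x - H₂ x)) ≤ ζ H₁ - ζ H₂ ∧ ζ H₁ - ζ H₂ ≤ ⨆ x, (H₁ x - H₂ x))
    (hhom : ∀ s : ℝ, 0 < s → ∀ H : C(M, ℝ), ζ (s • H) = s * ζ H)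
    (hsimple : ∀ Y : Set M, IsClosed Y →
      sInf {r : ℝ | ∃ a : C(M, ℝ),
        (∀ x, 0 ≤ a x ∧ a x ≤ 1) ∧ (∀ x ∈ Y, a x = 1) ∧ ζ a = r} = 0 ∨
      sInf {r : ℝ | ∃ a : C(M, ℝ),
        (∀ x, 0 ≤ a x ∧ a x ≤ 1) ∧ (∀ x ∈ Y, a x = 1) ∧ ζ a = r} = 1)
    (X : Set M) (hX : IsClosed X) (hXne : X.Nonempty)
    (hph : ∀ U : Set M, IsOpen U → X ⊆ U → ∃ F : C(M, ℝ), tsupport F ⊆ U ∧ 0 < ζ F) :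
    ∀ H : C(M, ℝ), sInf (H '' X) ≤ ζ H := by
  -- basic facts about ζ
  have hz0 : ζ 0 = 0 := by
    have h := hnorm 0
    have : (ContinuousMap.const M (0:ℝ)) = 0 := rfl
    rwa [this] at h
  have hmono : ∀ F G : C(M, ℝ), (∀ x, F x ≤ G x) → ζ F ≤ ζ G := by
    intro F G h
    have h2 := (hstab F G).2
    have hb : (⨆ x, (F x - G x)) ≤ 0 := ciSup_le fun x => by linarith [h x]
    linarith
  have htrans : ∀ (G : C(M, ℝ)) (c : ℝ), ζ (G + ContinuousMap.const M c) = ζ G + c := by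
    intro G c
    obtain ⟨h1, h2⟩ := hstab (G + ContinuousMap.const M c) G
    have e : ∀ x : M, (G + ContinuousMap.const M c) x - G x = c := fun x => by simp
    rw [iInf_congr e, ciInf_const] at h1
    rw [iSup_congr e, ciSup_const] at h2
    linarith
  have hhom' : ∀ s : ℝ, 0 ≤ s → ∀ H : C(M, ℝ), ζ (s • H) = s * ζ H := by
    intro s hs H
    rcases eq_or_lt_of_le hs with h | h
    · subst h; simp [hz0]
    · exact hhom s h H
  -- the set of test values for a closed set Y
  set S : Set M → Set ℝ := fun Y => {r : ℝ | ∃ a : C(M, ℝ),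
    (∀ x, 0 ≤ a x ∧ a x ≤ 1) ∧ (∀ x ∈ Y, a x = 1) ∧ ζ a = r} with hS
  have hmem1 : ∀ Y : Set M, (1:ℝ) ∈ S Y := by
    intro Y
    exact ⟨ContinuousMap.const M 1, fun x => by simp, fun x _ => by simp, hnorm 1⟩
  have hbdd : ∀ Y : Set M, ∀ r ∈ S Y, (0:ℝ) ≤ r := by
    rintro Y r ⟨a, ha01, -, rfl⟩
    have := hmono 0 a fun x => by simpa using (ha01 x).1
    rwa [hz0] at this
  have hbddB : ∀ Y : Set M, BddBelow (S Y) := fun Y => ⟨0, fun r hr => hbdd Y r hr⟩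
  -- Step 1: τ(X) = 1
  have hτX : sInf (S X) = 1 := by
    rcases hsimple X hX with h0 | h1
    · exfalso
      have h0' : sInf (S X) = 0 := h0
      have hlt : sInf (S X) < 1/2 := by rw [h0']; norm_num
      obtain ⟨r, hrS, hr⟩ := exists_lt_of_csInf_lt ⟨1, hmem1 X⟩ hlt
      obtain ⟨a, ha01, haX, rfl⟩ := hrS
      set U : Set M := {x | 1/2 < a x} with hU
      have hUopen : IsOpen U := isOpen_lt continuous_const a.continuous
      have hXU : X ⊆ U := fun x hx => by
        show (1:ℝ)/2 < a x
        rw [haX x hx]; norm_num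
      obtain ⟨F, hFsupp, hFζ⟩ := hph U hUopen hXU
      set Y := tsupport F with hY
      have hYcl : IsClosed Y := isClosed_tsupport F
      have hFne : F ≠ 0 := by
        intro h; rw [h, hz0] at hFζ; exact lt_irrefl 0 hFζ
      have hFnorm : (0:ℝ) < ‖F‖ := norm_pos_iff.mpr hFne
      -- any admissible function for Y has ζ ≥ ζ F / ‖F‖
      have hkey : ∀ r ∈ S Y, ζ F / ‖F‖ ≤ r := by
        rintro r ⟨b, hb01, hbY, rfl⟩
        have hpt : ∀ x, F x ≤ (‖F‖ • b) x := by
          intro x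
          by_cases hx : x ∈ Y
          · have : b x = 1 := hbY x hx
            simp only [ContinuousMap.smul_apply, smul_eq_mul, this, mul_one]
            exact le_trans (le_abs_self _) (ContinuousMap.norm_coe_le_norm F x)
          · have : F x = 0 := image_eq_zero_of_notMem_tsupport hx
            simp only [ContinuousMap.smul_apply, smul_eq_mul, this]
            exact mul_nonneg hFnorm.le (hb01 x).1
        have := hmono F (‖F‖ • b) hpt
        rw [hhom ‖F‖ hFnorm b] at this
        rw [div_le_iff₀ hFnorm]
        linarith
      have hτY : sInf (S Y) = 1 := by
        rcases hsimple Y hYcl with h | h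
        · exfalso
          have h' : sInf (S Y) = 0 := h
          have : ζ F / ‖F‖ ≤ sInf (S Y) := le_csInf ⟨1, hmem1 Y⟩ hkey
          rw [h'] at this
          have := div_pos hFζ hFnorm
          linarith
        · exact h
      -- b = min(2a, 1) is admissible for Y
      set b : C(M, ℝ) := ((2:ℝ) • a) ⊓ 1 with hb
      have hbx : ∀ x, b x = min (2 * a x) 1 := by
        intro x
        simp [hb, ContinuousMap.inf_apply, smul_eq_mul]
      have hbS : ζ b ∈ S Y := by
        refine ⟨b, fun x => ?_, fun x hx => ?_, rfl⟩
        · constructor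
          · rw [hbx x]
            exact le_min (by linarith [(ha01 x).1]) zero_le_one
          · rw [hbx x]; exact min_le_right _ _
        · have hxU : x ∈ U := hFsupp hx
          have : (1:ℝ)/2 < a x := hxU
          rw [hbx x]
          exact min_eq_right (by linarith)
      have h1b : 1 ≤ ζ b := by
        rw [← hτY]
        exact csInf_le (hbddB Y) hbS
      have hble : ζ b ≤ ζ ((2:ℝ) • a) := hmono b ((2:ℝ) • a) fun x => by
        rw [hbx x]
        simp only [ContinuousMap.smul_apply, smul_eq_mul]
        exact min_le_left _ _
      rw [hhom 2 (by norm_num) a] at hble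
      linarith
    · exact h1
  -- Step 2: X heavy
  intro H
  set m := sInf (H '' X) with hm
  by_contra hcon
  push_neg at hcon
  set ε := (m - ζ H)/2 with hε
  have hεpos : 0 < ε := by simp [hε]; linarith
  set U : Set M := {x | m - ε < H x} with hU
  have hUopen : IsOpen U := isOpen_lt continuous_const H.continuous
  have hXU : X ⊆ U := by
    intro x hx
    have hbdd' : BddBelow (H '' X) := ((hX.isCompact.image H.continuous)).bddBelow
    have : m ≤ H x := csInf_le hbdd' ⟨x, hx, rfl⟩
    simp only [hU, Set.mem_setOf_eq]
    linarith
  obtain ⟨a, hasupp, haX, ha01⟩ :=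
    exists_tsupport_one_of_isOpen_isClosed hUopen isClosed_closure.isCompact hX hXU
  have hζa : 1 ≤ ζ a := by
    rw [← hτX]
    exact csInf_le (hbddB X) ⟨a, fun x => ⟨(ha01 x).1, (ha01 x).2⟩,
      fun x hx => haX hx, rfl⟩
  set c : ℝ := min (m - ε) (-‖H‖) with hc
  have hcH : ∀ x, c ≤ H x := by
    intro x
    have := ContinuousMap.norm_coe_le_norm H x
    have : -‖H‖ ≤ H x := by
      have := abs_le.mp (le_trans (le_refl _) (ContinuousMap.norm_coe_le_norm H x))
      linarith [this.1]
    exact le_trans (min_le_right _ _) this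
  have hcm : c ≤ m - ε := min_le_left _ _
  set k : ℝ := m - ε - c with hk
  have hknn : 0 ≤ k := by simp [hk]; linarith
  have hpt : ∀ x, (k • a + ContinuousMap.const M c) x ≤ H x := by
    intro x
    simp only [ContinuousMap.add_apply, ContinuousMap.smul_apply, smul_eq_mul,
      ContinuousMap.const_apply]
    rcases eq_or_lt_of_le (ha01 x).1 with h | h
    · rw [← h, mul_zero, zero_add]; exact hcH x
    · have hxU : x ∈ U := hasupp (subset_tsupport a (by simp [Function.mem_support]; linarith))
      have hH : m - ε < H x := hxU
      have : k * a x ≤ k := by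
        nlinarith [(ha01 x).2]
      linarith
  have := hmono _ H hpt
  rw [htrans, hhom' k hknn a] at this
  nlinarith [mul_le_mul_of_nonneg_left hζa hknn]
end

section
/- Let ζ : C(M) → ℝ satisfy normalization, stability, and semi-homogeneity. Suppose every ζ-pseudoheavy closed subset of M is ζ-heavy. Then ζ is simple: for every closed X ⊂ M, τ_ζ(X) = 0 or τ_ζ(X) = 1. -/
/-- If every ζ-pseudoheavy closed subset is ζ-heavy, then ζ is simple. -/
theorem stmt_7 {M : Type*} [TopologicalSpace M] [CompactSpace M] [NormalSpace M] [Nonempty M]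
    (ζ : C(M, ℝ) → ℝ)
    (hnorm : ∀ c : ℝ, ζ (ContinuousMap.const M c) = c)
    (hstab : ∀ H₁ H₂ : C(M, ℝ),
      (⨅ x, (H₁ x - H₂ x)) ≤ ζ H₁ - ζ H₂ ∧ ζ H₁ - ζ H₂ ≤ ⨆ x, (H₁ x - H₂ x))
    (hhom : ∀ s : ℝ, 0 < s → ∀ H : C(M, ℝ), ζ (s • H) = s * ζ H)
    (hph_hv : ∀ Y : Set M, IsClosed Y →
      (∀ U : Set M, IsOpen U → Y ⊆ U → ∃ F : C(M, ℝ), tsupport F ⊆ U ∧ 0 < ζ F) →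
      ∀ H : C(M, ℝ), sInf (H '' Y) ≤ ζ H) :
    ∀ X : Set M, IsClosed X →
      sInf {r : ℝ | ∃ a : C(M, ℝ),
        (∀ x, 0 ≤ a x ∧ a x ≤ 1) ∧ (∀ x ∈ X, a x = 1) ∧ ζ a = r} = 0 ∨
      sInf {r : ℝ | ∃ a : C(M, ℝ),
        (∀ x, 0 ≤ a x ∧ a x ≤ 1) ∧ (∀ x ∈ X, a x = 1) ∧ ζ a = r} = 1 := by
  intro X hX
  set S : Set ℝ := {r : ℝ | ∃ a : C(M, ℝ),
        (∀ x, 0 ≤ a x ∧ a x ≤ 1) ∧ (∀ x ∈ X, a x = 1) ∧ ζ a = r} with hSdef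
  have hnonneg : ∀ r ∈ S, (0:ℝ) ≤ r := by
    rintro r ⟨a, ha01, -, rfl⟩
    have h1 := (hstab a (ContinuousMap.const M 0)).1
    have h2 : (0:ℝ) ≤ ⨅ x, (a x - (ContinuousMap.const M 0) x) :=
      le_ciInf fun x => by simpa using (ha01 x).1
    have h3 := hnorm 0
    linarith
  have hbdd : BddBelow S := ⟨0, hnonneg⟩
  have hone : (1:ℝ) ∈ S :=
    ⟨ContinuousMap.const M 1, fun x => by norm_num, fun x _ => rfl, hnorm 1⟩
  have hne : S.Nonempty := ⟨1, hone⟩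
  rcases Set.eq_empty_or_nonempty X with hXe | hXne
  · left
    have h0 : (0:ℝ) ∈ S :=
      ⟨ContinuousMap.const M 0, fun x => by norm_num, fun x hx => by simp [hXe] at hx,
        hnorm 0⟩
    exact le_antisymm (csInf_le hbdd h0) (le_csInf hne hnonneg)
  · by_cases hτ : sInf S = 0
    · exact Or.inl hτ
    right
    have hpos : 0 < sInf S := lt_of_le_of_ne (le_csInf hne hnonneg) (Ne.symm hτ)
    have hpseudo : ∀ U : Set M, IsOpen U → X ⊆ U →
        ∃ F : C(M, ℝ), tsupport F ⊆ U ∧ 0 < ζ F := by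
      intro U hU hXU
      obtain ⟨V, hVopen, hXV, hVU⟩ := normal_exists_closure_subset hX hU hXU
      obtain ⟨f, hf0, hf1, hf01⟩ :=
        exists_continuous_zero_one_of_isClosed (isClosed_compl_iff.mpr hVopen) hX
          (by rw [Set.disjoint_compl_left_iff_subset]; exact hXV)
      refine ⟨f, ?_, ?_⟩
      · refine subset_trans ?_ hVU
        apply closure_mono ?_ |>.trans (closure_mono (subset_refl V)) |>.trans le_rfl
        intro x hx
        by_contra hxV
        exact hx (hf0 hxV)
      · have hmem : ζ f ∈ S := ⟨f, fun x => ⟨(hf01 x).1, (hf01 x).2⟩, fun x hx => hf1 hx, rfl⟩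
        exact lt_of_lt_of_le hpos (csInf_le hbdd hmem)
    have hheavy := hph_hv X hX hpseudo
    have hge1 : ∀ r ∈ S, (1:ℝ) ≤ r := by
      rintro r ⟨a, ha01, haX, rfl⟩
      have himg : a '' X = {1} := by
        ext y
        constructor
        · rintro ⟨x, hx, rfl⟩; exact haX x hx
        · rintro rfl
          obtain ⟨x, hx⟩ := hXne
          exact ⟨x, hx, haX x hx⟩
      have := hheavy a
      rw [himg, csInf_singleton] at this
      exact this
    exact le_antisymm (csInf_le hbdd hone) (le_csInf hne hge1)
end

section
/- Let Φ : M → ℝᵏ be continuous on a compact space M, let y₁ ≠ y₂ in Φ(M), and let ζ : C(M) → ℝ be monotone and satisfy ζ(f∘Φ) = (f(y₁)+f(y₂))/2 for all continuous f : ℝᵏ → ℝ. Then Φ⁻¹(y₁) ∪ Φ⁻¹(y₂) is ζ-superheavy: ζ(H) ≤ sup over Φ⁻¹(y₁)∪Φ⁻¹(y₂) of H, for every H ∈ C(M). -/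
/-!
Given `c` strictly above `H` on the two fibres, the set `K = {H ≥ c}` is compact and `Φ '' K`
misses `{y₁, y₂}`. An Urysohn function `u` on `ℝᵏ` that vanishes at `y₁, y₂` and equals `1` on
`Φ '' K` gives `f = (1 - u) c + u ‖H‖` with `H ≤ f ∘ Φ` and `f(y₁) = f(y₂) = c`, so monotonicity
yields `ζ H ≤ c`; letting `c` decrease to the supremum of `H` on the fibres proves the claim.
-/

open Set

theorem ContinuousMap.exists_le_comp_of_lt_on_preimage {X Y : Type*} [TopologicalSpace X]
    [CompactSpace X] [TopologicalSpace Y] [T2Space Y] [NormalSpace Y] (Φ : C(X, Y)) {T : Set Y}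
    (hT : IsClosed T) (H : C(X, ℝ)) {c : ℝ} (hc : ∀ x ∈ Φ ⁻¹' T, H x < c) :
    ∃ f : C(Y, ℝ), (∀ x, H x ≤ f (Φ x)) ∧ ∀ y ∈ T, f y = c := by
  set K : Set X := {x | c ≤ H x}
  have hK : IsClosed (Φ '' K) :=
    ((isClosed_le continuous_const H.continuous).isCompact.image Φ.continuous).isClosed
  have hdisj : Disjoint T (Φ '' K) := by
    rw [disjoint_left]
    rintro _ hyT ⟨x, hxK, rfl⟩
    exact (hc x hyT).not_ge hxK
  obtain ⟨u, hu0, hu1, hu01⟩ := exists_continuous_zero_one_of_isClosed hT hK hdisj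
  refine ⟨⟨fun y => (1 - u y) * c + u y * ‖H‖, by fun_prop⟩, fun x => ?_, fun y hy => ?_⟩
  · have hH : H x ≤ ‖H‖ := (le_abs_self _).trans (H.norm_coe_le_norm x)
    show H x ≤ (1 - u (Φ x)) * c + u (Φ x) * ‖H‖
    by_cases hxK : x ∈ K
    · simp [hu1 (mem_image_of_mem Φ hxK), hH]
    · have hHc : H x < c := not_le.mp hxK
      obtain ⟨h0, h1⟩ := hu01 (Φ x)
      nlinarith
  · simp [hu0 hy]

theorem le_of_lt_on_preimage_pair {M Y : Type*} [TopologicalSpace M] [CompactSpace M]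
    [TopologicalSpace Y] [T2Space Y] [NormalSpace Y] (Φ : C(M, Y)) (y₁ y₂ : Y)
    (ζ : C(M, ℝ) → ℝ) (hmono : ∀ H₁ H₂ : C(M, ℝ), (∀ x, H₁ x ≤ H₂ x) → ζ H₁ ≤ ζ H₂)
    (hζ : ∀ f : C(Y, ℝ), ζ (f.comp Φ) = (f y₁ + f y₂) / 2) (H : C(M, ℝ)) {c : ℝ}
    (hc : ∀ x ∈ Φ ⁻¹' {y₁, y₂}, H x < c) : ζ H ≤ c := by
  obtain ⟨f, hHf, hfc⟩ :=
    Φ.exists_le_comp_of_lt_on_preimage ((finite_singleton y₂).insert y₁).isClosed H hc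
  calc ζ H ≤ ζ (f.comp Φ) := hmono _ _ hHf
    _ = c := by rw [hζ, hfc y₁ (mem_insert _ _), hfc y₂ (mem_insert_of_mem _ rfl)]; ring

theorem stmt_11_general {M : Type*} [MetricSpace M] [CompactSpace M] {k : ℕ}
    (Φ : C(M, Fin k → ℝ)) (y₁ y₂ : Fin k → ℝ)
    (ζ : C(M, ℝ) → ℝ)
    (hmono : ∀ H₁ H₂ : C(M, ℝ), (∀ x, H₁ x ≤ H₂ x) → ζ H₁ ≤ ζ H₂)
    (hζ : ∀ f : C((Fin k → ℝ), ℝ), ζ (f.comp Φ) = (f y₁ + f y₂) / 2) :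
    ∀ H : C(M, ℝ), ζ H ≤ sSup (H '' (⇑Φ ⁻¹' {y₁} ∪ ⇑Φ ⁻¹' {y₂})) := by
  intro H
  rw [← preimage_union, ← insert_eq]
  have hS : IsClosed (Φ ⁻¹' {y₁, y₂}) :=
    ((finite_singleton y₂).insert y₁).isClosed.preimage Φ.continuous
  have hbdd : BddAbove (H '' (Φ ⁻¹' {y₁, y₂})) := (hS.isCompact.image H.continuous).bddAbove
  refine le_of_forall_pos_le_add fun ε hε => le_of_lt_on_preimage_pair Φ y₁ y₂ ζ hmono hζ H ?_
  exact fun x hx => (le_csSup hbdd (mem_image_of_mem H hx)).trans_lt (lt_add_of_pos_right _ hε)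

/-- The union of the two fibers Φ⁻¹(y₁) ∪ Φ⁻¹(y₂) is ζ-superheavy. -/
theorem stmt_11 {M : Type*} [MetricSpace M] [CompactSpace M] [Nonempty M] {k : ℕ}
    (Φ : C(M, Fin k → ℝ)) (y₁ y₂ : Fin k → ℝ) (hy : y₁ ≠ y₂)
    (hy₁ : y₁ ∈ Set.range Φ) (hy₂ : y₂ ∈ Set.range Φ)
    (ζ : C(M, ℝ) → ℝ)
    (hmono : ∀ H₁ H₂ : C(M, ℝ), (∀ x, H₁ x ≤ H₂ x) → ζ H₁ ≤ ζ H₂)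
    (hζ : ∀ f : C((Fin k → ℝ), ℝ), ζ (f.comp Φ) = (f y₁ + f y₂) / 2) :
    ∀ H : C(M, ℝ), ζ H ≤ sSup (H '' (⇑Φ ⁻¹' {y₁} ∪ ⇑Φ ⁻¹' {y₂})) :=
  stmt_11_general Φ y₁ y₂ ζ hmono hζ
end

section
/- Under the same hypotheses (ζ monotone with ζ(f∘Φ) = (f(y₁)+f(y₂))/2 for all continuous f), the fiber Φ⁻¹(y₁) is ζ-pseudoheavy: for every open neighborhood U of Φ⁻¹(y₁) in M, there exists a continuous function F : M → ℝ supported in U with ζ(F) > 0. -/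
/-- The fiber Φ⁻¹(y₁) is ζ-pseudoheavy. -/
theorem stmt_13 {M : Type*} [MetricSpace M] [CompactSpace M] [Nonempty M] {k : ℕ}
    (Φ : C(M, Fin k → ℝ)) (y₁ y₂ : Fin k → ℝ) (hy : y₁ ≠ y₂)
    (hy₁ : y₁ ∈ Set.range Φ) (hy₂ : y₂ ∈ Set.range Φ)
    (ζ : C(M, ℝ) → ℝ)
    (hmono : ∀ H₁ H₂ : C(M, ℝ), (∀ x, H₁ x ≤ H₂ x) → ζ H₁ ≤ ζ H₂)
    (hζ : ∀ f : C((Fin k → ℝ), ℝ), ζ (f.comp Φ) = (f y₁ + f y₂) / 2) :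
    ∀ U : Set M, IsOpen U → ⇑Φ ⁻¹' {y₁} ⊆ U →
      ∃ F : C(M, ℝ), tsupport F ⊆ U ∧ 0 < ζ F := by
  intro U hU hUfib
  -- The set C = Φ(Uᶜ) ∪ {y₂} is closed and does not contain y₁.
  set C : Set (Fin k → ℝ) := (⇑Φ '' Uᶜ) ∪ {y₂} with hC
  have hCclosed : IsClosed C := by
    apply IsClosed.union
    · exact ((hU.isClosed_compl).isCompact.image Φ.continuous).isClosed
    · exact isClosed_singleton
  have hy₁C : y₁ ∉ C := by
    rintro (⟨x, hx, hxeq⟩ | h)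
    · exact hx (hUfib (by simpa using hxeq))
    · exact hy (by simpa using h)
  obtain ⟨ε, hε, hball⟩ := Metric.isOpen_iff.1 hCclosed.isOpen_compl y₁ hy₁C
  -- bump function
  set f : C((Fin k → ℝ), ℝ) :=
    ⟨fun y => max 0 (1 - (2 / ε) * dist y y₁), by fun_prop⟩ with hf
  have hfy₁ : f y₁ = 1 := by simp [hf]
  have hfout : ∀ y, ε / 2 ≤ dist y y₁ → f y = 0 := by
    intro y hyd
    have : 1 - (2 / ε) * dist y y₁ ≤ 0 := by
      have h2 : (2 / ε) * (ε / 2) ≤ (2 / ε) * dist y y₁ := by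
        apply mul_le_mul_of_nonneg_left hyd (by positivity)
      have h3 : (2 / ε) * (ε / 2) = 1 := by field_simp
      linarith
    simp [hf, max_eq_left this]
  have hfy₂ : f y₂ = 0 := by
    apply hfout
    by_contra h
    push_neg at h
    have : y₂ ∈ Metric.ball y₁ ε := by
      rw [Metric.mem_ball]; linarith
    exact hball this (Or.inr rfl)
  refine ⟨f.comp Φ, ?_, ?_⟩
  · -- support
    have hsupp : Function.support (⇑(f.comp Φ)) ⊆ ⇑Φ ⁻¹' (Metric.closedBall y₁ (ε / 2)) := by
      intro x hx
      simp only [Set.mem_preimage, Metric.mem_closedBall]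
      by_contra h
      push_neg at h
      exact hx (hfout _ h.le)
    have hclosed : IsClosed (⇑Φ ⁻¹' (Metric.closedBall y₁ (ε / 2))) :=
      Metric.isClosed_closedBall.preimage Φ.continuous
    have h1 : tsupport (⇑(f.comp Φ)) ⊆ ⇑Φ ⁻¹' (Metric.closedBall y₁ (ε / 2)) :=
      closure_minimal hsupp hclosed
    intro x hx
    have hxball : Φ x ∈ Metric.ball y₁ ε := by
      have := h1 hx
      simp only [Set.mem_preimage, Metric.mem_closedBall] at this
      rw [Metric.mem_ball]; linarith
    have hnC : Φ x ∉ C := hball hxball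
    by_contra hxU
    exact hnC (Or.inl ⟨x, hxU, rfl⟩)
  · rw [hζ f, hfy₁, hfy₂]
    norm_num
end

section
/- Let R > 0, f : [−1,1]² → ℝ continuous, and define J(p) = z₁ + Rz₂, H_f(p) = x₁x₂ + y₁y₂ + z₁z₂ − f(z₁,z₂) on S²×S², Φ = (J, H_f), and ψ(x₁,y₁,z₁,x₂,y₂,z₂) = (−x₁,y₁,−z₁,x₂,−y₂,−z₂). Define F(z) = −(f(−Rz,z) + f(Rz,−z) + 2Rz²)/2 for z ∈ [−1,1], with maximum M_{R,f} and minimum m_{R,f} over the set of z ∈ [−1,1] with |Rz| ≤ 1. If (a,b) ∉ {0} × [m_{R,f}, M_{R,f}], then ψ(Φ⁻¹(a,b)) ∩ Φ⁻¹(a,b) = ∅. -/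
/-- The unit sphere S² ⊂ ℝ³, points written (x, y, z). -/
def sphere2 : Set (ℝ × ℝ × ℝ) := {v | v.1 ^ 2 + v.2.1 ^ 2 + v.2.2 ^ 2 = 1}

/-- The involution ψ(x₁,y₁,z₁,x₂,y₂,z₂) = (−x₁,y₁,−z₁,x₂,−y₂,−z₂). -/
def psiMap : (ℝ × ℝ × ℝ) × (ℝ × ℝ × ℝ) → (ℝ × ℝ × ℝ) × (ℝ × ℝ × ℝ) :=
  fun p => ((-p.1.1, p.1.2.1, -p.1.2.2), (p.2.1, -p.2.2.1, -p.2.2.2))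

/-- J(p) = z₁ + R z₂. -/
def Jmap (R : ℝ) (p : (ℝ × ℝ × ℝ) × (ℝ × ℝ × ℝ)) : ℝ := p.1.2.2 + R * p.2.2.2

/-- H_f(p) = x₁x₂ + y₁y₂ + z₁z₂ − f(z₁, z₂). -/
def Hmap (f : ℝ → ℝ → ℝ) (p : (ℝ × ℝ × ℝ) × (ℝ × ℝ × ℝ)) : ℝ :=
  p.1.1 * p.2.1 + p.1.2.1 * p.2.2.1 + p.1.2.2 * p.2.2.2 - f p.1.2.2 p.2.2.2

/-- F_{R,f}(z) = −(f(−Rz, z) + f(Rz, −z) + 2Rz²)/2. -/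
noncomputable def Fmap (R : ℝ) (f : ℝ → ℝ → ℝ) (z : ℝ) : ℝ :=
  -(f (-R * z) z + f (R * z) (-z) + 2 * R * z ^ 2) / 2

/-! On the fiber over `(a, b)`, `ψ` negates `J`, so a point whose image stays in the fiber has
`a = 0`, i.e. `z₁ = -R z₂`. Then the cross terms of `H_f(p) + H_f(ψ p)` cancel and the sum is
`2 F_{R,f}(z₂)`, so `b = F_{R,f}(z₂)` with `z₂` in the admissible set, whose image under the
continuous `F_{R,f}` is compact and hence bounded. -/

open Set

lemma abs_snd_snd_le_one_of_mem_sphere2 {v : ℝ × ℝ × ℝ} (hv : v ∈ sphere2) : |v.2.2| ≤ 1 := by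
  rw [← sq_le_one_iff_abs_le_one]
  nlinarith [sq_nonneg v.1, sq_nonneg v.2.1, show v.1 ^ 2 + v.2.1 ^ 2 + v.2.2 ^ 2 = 1 from hv]

lemma Jmap_psiMap (R : ℝ) (p : (ℝ × ℝ × ℝ) × (ℝ × ℝ × ℝ)) :
    Jmap R (psiMap p) = -Jmap R p := by
  simp only [Jmap, psiMap]
  ring

lemma Hmap_add_Hmap_psiMap {R : ℝ} (f : ℝ → ℝ → ℝ) {p : (ℝ × ℝ × ℝ) × (ℝ × ℝ × ℝ)}
    (hp : Jmap R p = 0) : Hmap f p + Hmap f (psiMap p) = 2 * Fmap R f p.2.2.2 := by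
  obtain ⟨⟨x₁, y₁, z₁⟩, x₂, y₂, z₂⟩ := p
  obtain rfl : z₁ = -R * z₂ := by simp only [Jmap] at hp; linarith
  simp only [Hmap, psiMap, Fmap, neg_mul, neg_neg]
  ring

lemma continuous_Fmap (R : ℝ) {f : ℝ → ℝ → ℝ} (hf : Continuous fun q : ℝ × ℝ => f q.1 q.2) :
    Continuous (Fmap R f) := by
  unfold Fmap
  have h₁ : Continuous fun z : ℝ => f (-R * z) z :=
    hf.comp (by fun_prop : Continuous fun z : ℝ => (-R * z, z))
  have h₂ : Continuous fun z : ℝ => f (R * z) (-z) :=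
    hf.comp (by fun_prop : Continuous fun z : ℝ => (R * z, -z))
  fun_prop

lemma isCompact_image_Fmap (R : ℝ) {f : ℝ → ℝ → ℝ}
    (hf : Continuous fun q : ℝ × ℝ => f q.1 q.2) :
    IsCompact (Fmap R f '' {z ∈ Icc (-1 : ℝ) 1 | |R * z| ≤ 1}) :=
  (isCompact_Icc.inter_right
    (isClosed_le (f := fun z : ℝ => |R * z|) (by fun_prop) continuous_const)).image
    (continuous_Fmap R hf)

theorem stmt_15_general (R : ℝ) (f : ℝ → ℝ → ℝ)
    (hf : Continuous fun q : ℝ × ℝ => f q.1 q.2) (a b : ℝ)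
    (hab : ¬ (a = 0 ∧
      sInf (Fmap R f '' {z ∈ Set.Icc (-1 : ℝ) 1 | |R * z| ≤ 1}) ≤ b ∧
      b ≤ sSup (Fmap R f '' {z ∈ Set.Icc (-1 : ℝ) 1 | |R * z| ≤ 1}))) :
    ∀ p ∈ {q ∈ sphere2 ×ˢ sphere2 | Jmap R q = a ∧ Hmap f q = b},
      psiMap p ∉ {q ∈ sphere2 ×ˢ sphere2 | Jmap R q = a ∧ Hmap f q = b} := by
  rintro p ⟨⟨hp₁, hp₂⟩, hJ, hH⟩ ⟨-, hJψ, hHψ⟩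
  rw [Jmap_psiMap] at hJψ
  have ha : a = 0 := by linarith
  have hb : b = Fmap R f p.2.2.2 := by
    have := Hmap_add_Hmap_psiMap f (hJ.trans ha)
    linarith
  have hz₁ : p.1.2.2 = -(R * p.2.2.2) := by simp only [Jmap] at hJ; linarith
  have hmem : b ∈ Fmap R f '' {z ∈ Icc (-1 : ℝ) 1 | |R * z| ≤ 1} := by
    refine ⟨p.2.2.2, ⟨abs_le.mp (abs_snd_snd_le_one_of_mem_sphere2 hp₂), ?_⟩, hb.symm⟩
    simpa [hz₁] using abs_snd_snd_le_one_of_mem_sphere2 hp₁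
  have hK := isCompact_image_Fmap R hf
  exact hab ⟨ha, csInf_le hK.bddBelow hmem, le_csSup hK.bddAbove hmem⟩

/-- If (a,b) ∉ {0} × [m_{R,f}, M_{R,f}], then ψ displaces the fiber Φ_{R,f}⁻¹(a,b) from itself. -/
theorem stmt_15 (R : ℝ) (hR : 0 < R) (f : ℝ → ℝ → ℝ)
    (hf : Continuous fun q : ℝ × ℝ => f q.1 q.2) (a b : ℝ)
    (hab : ¬ (a = 0 ∧
      sInf (Fmap R f '' {z ∈ Set.Icc (-1 : ℝ) 1 | |R * z| ≤ 1}) ≤ b ∧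
      b ≤ sSup (Fmap R f '' {z ∈ Set.Icc (-1 : ℝ) 1 | |R * z| ≤ 1}))) :
    ∀ p ∈ {q ∈ sphere2 ×ˢ sphere2 | Jmap R q = a ∧ Hmap f q = b},
      psiMap p ∉ {q ∈ sphere2 ×ˢ sphere2 | Jmap R q = a ∧ Hmap f q = b} :=
  stmt_15_general R f hf a b hab
end

section
/- Let Φ : M → ℝᵏ be the moment map of a finite-dimensional Poisson-commutative subspace and ζ a partial symplectic quasi-state. Abstract version: suppose ζ : C(M) → ℝ is monotone, normalized, and satisfies ζ(Σᵢ Gᵢ) ≤ Σᵢ ζ(Gᵢ) for finitely many functions Gᵢ ∈ C(M) of the form Gᵢ = (ρᵢ·H)∘Φ with Φ : M → ℝᵏ continuous, H : ℝᵏ → ℝ continuous. Let X = Φ⁻¹(p) and assume every fiber Φ⁻¹(y) with y ≠ p, y ∈ Φ(M), is not ζ-pseudoheavy. Then for every continuous H : ℝᵏ → ℝ vanishing on a neighborhood V of p, one has ζ(H∘Φ) ≤ 0. Consequently X is ζ-superheavy. -/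
/-- If every fiber of Φ other than Φ⁻¹(p) is not ζ-pseudoheavy, then ζ(H∘Φ) ≤ 0 for every
H vanishing near p, and consequently Φ⁻¹(p) is ζ-superheavy. -/
theorem stmt_19 {M : Type*} [MetricSpace M] [CompactSpace M] [Nonempty M] {k : ℕ}
    (Φ : C(M, Fin k → ℝ)) (p : Fin k → ℝ) (hp : p ∈ Set.range Φ)
    (ζ : C(M, ℝ) → ℝ)
    (hmono : ∀ H₁ H₂ : C(M, ℝ), (∀ x, H₁ x ≤ H₂ x) → ζ H₁ ≤ ζ H₂)
    (hnorm : ∀ c : ℝ, ζ (ContinuousMap.const M c) = c)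
    (hsub : ∀ (d : ℕ) (h : Fin d → C((Fin k → ℝ), ℝ)),
      ζ (∑ i, (h i).comp Φ) ≤ ∑ i, ζ ((h i).comp Φ))
    (hnph : ∀ y ∈ Set.range Φ, y ≠ p →
      ¬ (∀ U : Set M, IsOpen U → ⇑Φ ⁻¹' {y} ⊆ U →
          ∃ F : C(M, ℝ), tsupport F ⊆ U ∧ 0 < ζ F)) :
    (∀ (H : C((Fin k → ℝ), ℝ)) (V : Set (Fin k → ℝ)), IsOpen V → p ∈ V →
        (∀ y ∈ V, H y = 0) → ζ (H.comp Φ) ≤ 0) ∧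
    (∀ H : C(M, ℝ), ζ H ≤ sSup (H '' (⇑Φ ⁻¹' {p}))) := by
  classical
  -- subadditivity over an arbitrary finite index type
  have hsub' : ∀ (ι : Type) (_ : Fintype ι) (h : ι → C((Fin k → ℝ), ℝ)),
      ζ (∑ i, (h i).comp Φ) ≤ ∑ i, ζ ((h i).comp Φ) := by
    intro ι _ h
    set e := (Fintype.equivFin ι).symm
    have h1 : (∑ i, (h i).comp Φ) = ∑ j, (h (e j)).comp Φ :=
      (Equiv.sum_comp e fun i => (h i).comp Φ).symm
    have h2 : (∑ i, ζ ((h i).comp Φ)) = ∑ j, ζ ((h (e j)).comp Φ) :=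
      (Equiv.sum_comp e fun i => ζ ((h i).comp Φ)).symm
    rw [h1, h2]
    exact hsub _ _
  -- properness of Φ
  have proper : ∀ (y : Fin k → ℝ) (U : Set M), IsOpen U → ⇑Φ ⁻¹' {y} ⊆ U →
      ∃ W : Set (Fin k → ℝ), IsOpen W ∧ y ∈ W ∧ ⇑Φ ⁻¹' W ⊆ U := by
    intro y U hUo hU
    refine ⟨(⇑Φ '' Uᶜ)ᶜ, ?_, ?_, ?_⟩
    · exact ((hUo.isClosed_compl.isCompact).image Φ.continuous).isClosed.isOpen_compl
    · rintro ⟨x, hx, hxy⟩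
      exact hx (hU (by simp [hxy]))
    · intro x hx
      by_contra hxU
      exact hx ⟨x, hxU, rfl⟩
  have part1 : ∀ (H : C((Fin k → ℝ), ℝ)) (V : Set (Fin k → ℝ)), IsOpen V → p ∈ V →
      (∀ y ∈ V, H y = 0) → ζ (H.comp Φ) ≤ 0 := by
    intro H V hVo hpV hHV
    set K : Set (Fin k → ℝ) := Set.range Φ \ V with hK
    have hKc : IsCompact K := (isCompact_range Φ.continuous).diff hVo
    have key : ∀ y ∈ K, ∃ W : Set (Fin k → ℝ), IsOpen W ∧ y ∈ W ∧
        ∀ F : C(M, ℝ), tsupport F ⊆ ⇑Φ ⁻¹' W → ζ F ≤ 0 := by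
      intro y hy
      have hyr : y ∈ Set.range Φ := hy.1
      have hyp : y ≠ p := fun h => hy.2 (h ▸ hpV)
      have hn := hnph y hyr hyp
      push_neg at hn
      obtain ⟨U, hUo, hUsub, hUF⟩ := hn
      obtain ⟨W, hWo, hyW, hWU⟩ := proper y U hUo hUsub
      exact ⟨W, hWo, hyW, fun F hF => hUF F (hF.trans hWU)⟩
    choose! W hWo hyW hWF using key
    obtain ⟨t, ht⟩ := hKc.elim_nhds_subcover' (fun y _ => W y)
      (fun y hy => ((hWo y hy).mem_nhds (hyW y hy)))
    have hcover : K ⊆ ⋃ i : ↥t, W ((i : ↥K) : Fin k → ℝ) := by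
      intro y hy
      rcases Set.mem_iUnion₂.1 (ht hy) with ⟨x, hx, hyx⟩
      exact Set.mem_iUnion.2 ⟨⟨x, hx⟩, hyx⟩
    obtain ⟨ρ, hρ⟩ := PartitionOfUnity.exists_isSubordinate (s := K) hKc.isClosed
      (fun i : ↥t => W ((i : ↥K) : Fin k → ℝ)) (fun i => hWo _ (i : ↥K).2) hcover
    have hEq : H.comp Φ = ∑ i : ↥t, ((ρ i) * H).comp Φ := by
      ext x
      simp only [ContinuousMap.comp_apply, ContinuousMap.sum_apply, ContinuousMap.mul_apply]
      by_cases hx : Φ x ∈ V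
      · simp [hHV _ hx]
      · have hxK : Φ x ∈ K := ⟨⟨x, rfl⟩, hx⟩
        have hs1 : ∑ᶠ i, ρ i (Φ x) = 1 := ρ.sum_eq_one hxK
        rw [finsum_eq_sum_of_fintype] at hs1
        rw [← Finset.sum_mul, hs1, one_mul]
    calc ζ (H.comp Φ) = ζ (∑ i : ↥t, ((ρ i) * H).comp Φ) := by rw [hEq]
      _ ≤ ∑ i : ↥t, ζ (((ρ i) * H).comp Φ) := hsub' _ inferInstance _
      _ ≤ 0 := by
          refine Finset.sum_nonpos fun i _ => ?_
          have h1 : Function.support ⇑(((ρ i) * H).comp Φ) ⊆ ⇑Φ ⁻¹' tsupport ⇑(ρ i) := by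
            intro x hx
            have hne : ρ i (Φ x) ≠ 0 := by
              intro h0
              apply hx
              simp [h0]
            exact subset_tsupport _ hne
          have h3 : tsupport ⇑(((ρ i) * H).comp Φ) ⊆ ⇑Φ ⁻¹' tsupport ⇑(ρ i) :=
            closure_minimal h1 ((isClosed_tsupport _).preimage Φ.continuous)
          exact hWF _ (i : ↥K).2 _ (h3.trans (Set.preimage_mono (hρ i)))
  refine ⟨part1, ?_⟩
  intro H
  have hXcl : IsClosed (⇑Φ ⁻¹' {p}) := isClosed_singleton.preimage Φ.continuous
  have hXc : IsCompact (⇑Φ ⁻¹' {p}) := hXcl.isCompact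
  have hbdd : BddAbove (H '' (⇑Φ ⁻¹' {p})) := (hXc.image H.continuous).bddAbove
  set s := sSup (H '' (⇑Φ ⁻¹' {p})) with hsdef
  have hHs : ∀ x ∈ ⇑Φ ⁻¹' {p}, H x ≤ s := fun x hx => le_csSup hbdd ⟨x, hx, rfl⟩
  refine le_of_forall_pos_le_add ?_
  intro ε hε
  set A : Set M := {x | s + ε ≤ H x} with hA
  have hAc : IsClosed A := isClosed_le continuous_const H.continuous
  have hTc : IsCompact (⇑Φ '' A) := hAc.isCompact.image Φ.continuous
  have hpT : p ∉ ⇑Φ '' A := by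
    rintro ⟨a, ha, hap⟩
    have h1 : H a ≤ s := hHs a (by simp [hap])
    have h2 : s + ε ≤ H a := ha
    linarith
  obtain ⟨r, hr, hball⟩ : ∃ r > 0, Metric.closedBall p r ⊆ (⇑Φ '' A)ᶜ :=
    (Metric.nhds_basis_closedBall.mem_iff).1 (hTc.isClosed.isOpen_compl.mem_nhds hpT)
  have hdisj : Disjoint (Metric.closedBall p r) (⇑Φ '' A) :=
    Set.disjoint_left.2 fun y hy => hball hy
  obtain ⟨g, hg0, hg1, hg01⟩ :=
    exists_continuous_zero_one_of_isClosed Metric.isClosed_closedBall hTc.isClosed hdisj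
  obtain ⟨xm, -, hxm'⟩ := isCompact_univ.exists_isMaxOn Set.univ_nonempty
    H.continuous.continuousOn
  have hxm : ∀ x : M, H x ≤ H xm := fun x => hxm' (Set.mem_univ x)
  set c₀ : ℝ := max (H xm - (s + ε)) 0 with hc₀
  set G : C((Fin k → ℝ), ℝ) := c₀ • g with hG
  have hGapp : ∀ y, G y = c₀ * g y := fun y => rfl
  have hGnn : ∀ y, 0 ≤ G y := by
    intro y
    rw [hGapp]
    exact mul_nonneg (le_max_right _ _) (hg01 y).1
  have hG0 : ∀ y ∈ Metric.ball p r, G y = 0 := by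
    intro y hy
    rw [hGapp, hg0 (Metric.ball_subset_closedBall hy)]
    simp
  have hζG : ζ (G.comp Φ) ≤ 0 :=
    part1 G (Metric.ball p r) Metric.isOpen_ball (Metric.mem_ball_self hr) hG0
  have hpt : ∀ x, H x ≤ ((G + ContinuousMap.const _ (s + ε)).comp Φ) x := by
    intro x
    simp only [ContinuousMap.comp_apply, ContinuousMap.add_apply, ContinuousMap.const_apply]
    by_cases hx : s + ε ≤ H x
    · have hg1x : g (Φ x) = 1 := hg1 ⟨x, hx, rfl⟩
      have hGx : G (Φ x) = c₀ := by rw [hGapp, hg1x, mul_one]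
      have hc : H xm - (s + ε) ≤ c₀ := le_max_left _ _
      have hC : H x ≤ H xm := hxm x
      rw [hGx]
      linarith
    · push_neg at hx
      have := hGnn (Φ x)
      linarith
  have h2 : ζ H ≤ ζ ((G + ContinuousMap.const _ (s + ε)).comp Φ) := hmono _ _ hpt
  have h3 := hsub 2 ![G, ContinuousMap.const _ (s + ε)]
  have hsum : (∑ i : Fin 2, ((![G, ContinuousMap.const _ (s + ε)]) i).comp Φ)
      = (G + ContinuousMap.const _ (s + ε)).comp Φ := by
    ext x
    simp [Fin.sum_univ_two]
  rw [hsum, Fin.sum_univ_two] at h3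
  have h4 : ζ ((ContinuousMap.const (Fin k → ℝ) (s + ε)).comp Φ) = s + ε := by
    have he : (ContinuousMap.const (Fin k → ℝ) (s + ε)).comp Φ = ContinuousMap.const M (s + ε) := by
      ext x; rfl
    rw [he, hnorm]
  simp only [Matrix.cons_val_zero, Matrix.cons_val_one, Matrix.head_cons] at h3
  rw [h4] at h3
  linarith [h2, h3, hζG]
end
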